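/- Let C be an n×n real symmetric positive-semidefinite matrix and let 0 < s < n be an integer with s > rank(C). Then the scaled linx bound tends to −∞ as the scaling parameter tends to +∞: lim_{γ→+∞} linx(C,s;γ) = −∞. In particular, no optimal scaling parameter exists. -/

import Mathlib

/-!
For `x ∈ P(n,s)` the matrix `γ C Diag(x) C + Diag(e - x)` is dominated in the Loewner order by
`I + γ C²` (the difference is `γ C Diag(e - x) C + Diag(x)`), and the determinant is monotone on
positive semidefinite matrices. The eigenvalues of `γ C²` are at most `γ tr(C²)`, and at most
`rank C` of them are nonzero, so `det(I + γ C²) ≤ (1 + γ tr(C²))^rank C`. Hence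
`linx(C,s;γ) ≤ (rank C · log(1 + γ tr(C²)) - s log γ) / 2`, which tends to `-∞` when `rank C < s`.
-/

open Matrix Real Set Filter

noncomputable section

/-- The feasible polytope `P(n,s)`. -/
def PP (n s : ℕ) : Set (Fin n → ℝ) :=
  {x | (∑ i, x i) = (s : ℝ) ∧ ∀ i, 0 ≤ x i ∧ x i ≤ 1}

/-- The scaled linx objective `f(C,s;γ;x)`. -/
def fLinxScaled {n : ℕ} (C : Matrix (Fin n) (Fin n) ℝ) (s : ℕ) (γ : ℝ) (x : Fin n → ℝ) : ℝ :=
  (1 / 2) * (Real.log ((γ • (C * Matrix.diagonal x * C) + Matrix.diagonal fun i => 1 - x i).det)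
    - (s : ℝ) * Real.log γ)

/-- The scaled linx bound `linx(C,s;γ)`. -/
def linxScaled (n s : ℕ) (C : Matrix (Fin n) (Fin n) ℝ) (γ : ℝ) : ℝ :=
  sSup (fLinxScaled C s γ '' PP n s)

namespace Matrix

variable {ι : Type*} [Fintype ι]

theorem IsHermitian.posSemidef_mul_self {C : Matrix ι ι ℝ} (hC : C.IsHermitian) :
    (C * C).PosSemidef := by
  simpa only [hC.eq] using posSemidef_conjTranspose_mul_self C

variable [DecidableEq ι]

theorem IsHermitian.det_one_add_smul {A : Matrix ι ι ℝ} (hA : A.IsHermitian) (γ : ℝ) :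
    (1 + γ • A).det = ∏ i, (1 + γ * hA.eigenvalues i) := by
  have hU := mem_unitaryGroup_iff.mp hA.eigenvectorUnitary.2
  conv_lhs => rw [hA.spectral_theorem, ← map_one (Unitary.conjStarAlgAut ℝ _ hA.eigenvectorUnitary),
    ← map_smul, ← map_add, Unitary.conjStarAlgAut_apply, det_mul_right_comm, hU, Matrix.one_mul,
    ← diagonal_one, ← diagonal_smul, diagonal_add, det_diagonal]
  simp

theorem PosSemidef.one_le_det_one_add {Q : Matrix ι ι ℝ} (hQ : Q.PosSemidef) :
    1 ≤ (1 + Q).det := by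
  have h := hQ.1.det_one_add_smul 1
  rw [one_smul] at h
  rw [h]
  exact Finset.one_le_prod fun i _ => by simpa using hQ.eigenvalues_nonneg i

open scoped MatrixOrder in
theorem PosSemidef.det_le_det_add {M P : Matrix ι ι ℝ} (hM : M.PosSemidef) (hP : P.PosSemidef) :
    M.det ≤ (M + P).det := by
  rcases hM.det_nonneg.eq_or_lt with h0 | hpos
  · rw [← h0]
    exact (hM.add hP).det_nonneg
  -- With `S = √M` invertible, `M + P = S (1 + S⁻¹ P S⁻¹) S`.
  set S := CFC.sqrt M
  have hSS : S * S = M := CFC.sqrt_mul_sqrt_self M hM.nonneg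
  have hSdet : IsUnit S.det := by
    refine isUnit_iff_ne_zero.mpr fun h => hpos.ne' ?_
    rw [← hSS, det_mul, h, zero_mul]
  have hQ : (S⁻¹ * P * S⁻¹).PosSemidef := by
    have h := hP.mul_mul_conjTranspose_same S⁻¹
    rwa [conjTranspose_nonsing_inv, (CFC.sqrt_nonneg M).posSemidef.1.eq] at h
  have hsplit : M + P = S * (1 + S⁻¹ * P * S⁻¹) * S := by
    simp only [Matrix.mul_add, Matrix.add_mul, Matrix.mul_one, hSS, Matrix.mul_assoc,
      nonsing_inv_mul _ hSdet, mul_nonsing_inv_cancel_left _ _ hSdet]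
  calc M.det = M.det * 1 := (mul_one _).symm
    _ ≤ M.det * (1 + S⁻¹ * P * S⁻¹).det := by gcongr; exact hQ.one_le_det_one_add
    _ = (M + P).det := by rw [hsplit, det_mul, det_mul, ← hSS, det_mul]; ring

theorem PosSemidef.det_one_add_smul_le {A : Matrix ι ι ℝ} (hA : A.PosSemidef) {γ : ℝ}
    (hγ : 0 ≤ γ) : (1 + γ • A).det ≤ (1 + γ * A.trace) ^ A.rank := by
  have hev_le : ∀ i, hA.1.eigenvalues i ≤ A.trace := fun i => by
    rw [hA.1.trace_eq_sum_eigenvalues]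
    exact_mod_cast Finset.single_le_sum (fun j _ => hA.eigenvalues_nonneg j) (Finset.mem_univ i)
  rw [hA.1.det_one_add_smul, hA.1.rank_eq_card_non_zero_eigs, Fintype.card_subtype,
    ← Finset.prod_filter_of_ne (p := fun i => hA.1.eigenvalues i ≠ 0) fun i _ h hi => by simp_all,
    ← Finset.prod_const]
  exact Finset.prod_le_prod (fun i _ => add_nonneg zero_le_one (mul_nonneg hγ
    (hA.eigenvalues_nonneg i))) fun i _ => by gcongr; exact hev_le i

theorem posSemidef_smul_mul_diagonal_mul_add_diagonal {C : Matrix ι ι ℝ} (hC : C.IsHermitian)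
    {d e : ι → ℝ} (hd : 0 ≤ d) (he : 0 ≤ e) {γ : ℝ} (hγ : 0 ≤ γ) :
    (γ • (C * diagonal d * C) + diagonal e).PosSemidef := by
  refine PosSemidef.add (PosSemidef.smul ?_ hγ) (posSemidef_diagonal_iff.mpr he)
  have h := (posSemidef_diagonal_iff.mpr hd).mul_mul_conjTranspose_same C
  rwa [hC.eq] at h

theorem det_smul_mul_diagonal_mul_add_diagonal_le {C : Matrix ι ι ℝ} (hC : C.IsHermitian)
    {x : ι → ℝ} (hx : ∀ i, 0 ≤ x i ∧ x i ≤ 1) {γ : ℝ} (hγ : 0 ≤ γ) :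
    (γ • (C * diagonal x * C) + diagonal fun i => 1 - x i).det
      ≤ (1 + γ * (C * C).trace) ^ C.rank := by
  have hCC := hC.posSemidef_mul_self
  have hsum : (γ • (C * diagonal x * C) + diagonal fun i => 1 - x i) +
      (γ • (C * diagonal (fun i => 1 - x i) * C) + diagonal x) = 1 + γ • (C * C) := by
    rw [add_add_add_comm, ← smul_add, ← Matrix.add_mul, ← Matrix.mul_add, diagonal_add,
      diagonal_add, add_comm]
    simp
  calc _ ≤ (1 + γ • (C * C)).det := by
        rw [← hsum]
        exact (posSemidef_smul_mul_diagonal_mul_add_diagonal hC (fun i => (hx i).1)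
          (fun i => sub_nonneg.mpr (hx i).2) hγ).det_le_det_add
          (posSemidef_smul_mul_diagonal_mul_add_diagonal hC
          (fun i => sub_nonneg.mpr (hx i).2) (fun i => (hx i).1) hγ)
    _ ≤ (1 + γ * (C * C).trace) ^ (C * C).rank := hCC.det_one_add_smul_le hγ
    _ ≤ (1 + γ * (C * C).trace) ^ C.rank :=
        pow_le_pow_right₀ (le_add_of_nonneg_right (mul_nonneg hγ hCC.trace_nonneg))
          (rank_mul_le_left C C)

end Matrix

theorem PP_nonempty {n s : ℕ} (hsn : s ≤ n) : (PP n s).Nonempty := by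
  refine ⟨fun _ => s / n, ?_, fun _ => ⟨by positivity, div_le_one_of_le₀ (by exact_mod_cast hsn)
    (by positivity)⟩⟩
  rcases n.eq_zero_or_pos with rfl | hn
  · simp_all
  · simp [mul_div_cancel₀, hn.ne']

section

variable {n s : ℕ} {C : Matrix (Fin n) (Fin n) ℝ}

theorem fLinxScaled_le (hC : C.IsHermitian) {x : Fin n → ℝ} (hx : ∀ i, 0 ≤ x i ∧ x i ≤ 1)
    {γ : ℝ} (hγ : 0 ≤ γ) :
    fLinxScaled C s γ x ≤
      (1 / 2) * (C.rank * Real.log (1 + γ * (C * C).trace) - s * Real.log γ) := by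
  have hbase : 1 ≤ 1 + γ * (C * C).trace := le_add_of_nonneg_right
    (mul_nonneg hγ hC.posSemidef_mul_self.trace_nonneg)
  have hdet := det_smul_mul_diagonal_mul_add_diagonal_le hC hx hγ
  have hlog : Real.log ((γ • (C * diagonal x * C) + diagonal fun i => 1 - x i).det)
      ≤ C.rank * Real.log (1 + γ * (C * C).trace) := by
    rw [← Real.log_pow]
    rcases (posSemidef_smul_mul_diagonal_mul_add_diagonal hC (fun i => (hx i).1)
      (fun i => sub_nonneg.mpr (hx i).2) hγ).det_nonneg.eq_or_lt with h0 | hpos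
    · rw [← h0, Real.log_zero]
      exact Real.log_nonneg (one_le_pow₀ hbase)
    · exact Real.log_le_log hpos hdet
  unfold fLinxScaled
  gcongr

theorem linxScaled_le (hsn : s ≤ n) (hC : C.IsHermitian) {γ : ℝ} (hγ : 0 ≤ γ) :
    linxScaled n s C γ ≤
      (1 / 2) * (C.rank * Real.log (1 + γ * (C * C).trace) - s * Real.log γ) :=
  csSup_le ((PP_nonempty hsn).image _) fun _ ⟨_, hx, hfx⟩ => hfx ▸ fLinxScaled_le hC hx.2 hγ

end

theorem tendsto_mul_log_one_add_mul_sub_mul_log_atBot {r s T : ℝ} (hr : 0 ≤ r) (hrs : r < s)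
    (hT : 0 ≤ T) :
    Tendsto (fun γ => r * Real.log (1 + γ * T) - s * Real.log γ) atTop atBot := by
  have hlin : Tendsto (fun γ => r * Real.log (1 + T) + (r - s) * Real.log γ) atTop atBot :=
    tendsto_atBot_add_const_left _ _
      ((tendsto_const_mul_atBot_of_neg (by linarith)).mpr Real.tendsto_log_atTop)
  refine tendsto_atBot_mono' _ ?_ hlin
  filter_upwards [eventually_ge_atTop 1] with γ hγ
  have h : Real.log (1 + γ * T) ≤ Real.log (1 + T) + Real.log γ := by
    rw [← Real.log_mul (by positivity) (by positivity)]
    exact Real.log_le_log (by positivity) (by nlinarith)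
  nlinarith

theorem stmt_18_general (n s : ℕ) (hsn : s < n)
    (C : Matrix (Fin n) (Fin n) ℝ) (hC : C.PosSemidef) (hrank : C.rank < s) :
    Filter.Tendsto (fun γ : ℝ => linxScaled n s C γ) Filter.atTop Filter.atBot ∧
    ∀ γ : ℝ, 0 < γ → ∃ γ' : ℝ, 0 < γ' ∧ linxScaled n s C γ' < linxScaled n s C γ := by
  have hlim : Tendsto (fun γ : ℝ => linxScaled n s C γ) atTop atBot := by
    refine tendsto_atBot_mono' _ ?_ ((tendsto_mul_log_one_add_mul_sub_mul_log_atBot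
      (Nat.cast_nonneg C.rank) (Nat.cast_lt.mpr hrank)
      hC.1.posSemidef_mul_self.trace_nonneg).const_mul_atBot one_half_pos)
    filter_upwards [eventually_ge_atTop 0] with γ hγ
    exact linxScaled_le hsn.le hC.1 hγ
  refine ⟨hlim, fun γ _ => ?_⟩
  obtain ⟨γ', hlt, hpos⟩ :=
    ((hlim.eventually (eventually_lt_atBot (linxScaled n s C γ))).and (eventually_gt_atTop 0)).exists
  exact ⟨γ', hpos, hlt⟩

theorem stmt_18 (n s : ℕ) (hs : 0 < s) (hsn : s < n)
    (C : Matrix (Fin n) (Fin n) ℝ) (hC : C.PosSemidef) (hrank : C.rank < s) :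
    Filter.Tendsto (fun γ : ℝ => linxScaled n s C γ) Filter.atTop Filter.atBot ∧
    ∀ γ : ℝ, 0 < γ → ∃ γ' : ℝ, 0 < γ' ∧ linxScaled n s C γ' < linxScaled n s C γ :=
  stmt_18_general n s hsn C hC hrank
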